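/- Let K be a field, n a positive integer, and D a line in K^n. Every matrix in M_D := {M ∈ M_n(K) : D ⊆ ker M} is singular, and M_D is maximal among linear subspaces of M_n(K) consisting entirely of singular matrices. -/

import Mathlib

/-- The space of `n × n` matrices annihilating a given subspace `D ⊆ Kⁿ`. -/
def annihilatorSpace (K : Type*) [Field K] (n : ℕ)
    (D : Submodule K (Fin n → K)) : Submodule K (Matrix (Fin n) (Fin n) K) where
  carrier := {M | ∀ x ∈ D, M.mulVec x = 0}
  add_mem' := by
    intro a b ha hb x hx
    simp [Matrix.add_mulVec, ha x hx, hb x hx]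
  zero_mem' := by
    intro x hx
    simp [Matrix.zero_mulVec]
  smul_mem' := by
    intro c a ha x hx
    simp [Matrix.smul_mulVec, ha x hx]

/-! If `D = K ∙ v` and some `A` in a singular space `W ⊇ M_D` had `A v ≠ 0`, take an invertible
`B` with `B v = A v` (invertible matrices act transitively on nonzero vectors). Then `B - A ∈ M_D`,
so `B = (B - A) + A ∈ W`, a contradiction. -/

open Matrix Submodule

theorem LinearEquiv.exists_apply_eq_of_ne_zero {K V : Type*} [Field K] [AddCommGroup V]
    [Module K V] {v w : V} (hv : v ≠ 0) (hw : w ≠ 0) :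
    ∃ g : V ≃ₗ[K] V, g v = w := by
  obtain ⟨g, hg⟩ := exists_linearEquiv_restrict_eq
    ((LinearEquiv.toSpanNonzeroSingleton K V v hv).symm ≪≫ₗ
      LinearEquiv.toSpanNonzeroSingleton K V w hw)
  refine ⟨g, ?_⟩
  have h := hg (LinearEquiv.toSpanNonzeroSingleton K V v hv 1)
  rw [LinearEquiv.trans_apply, LinearEquiv.symm_apply_apply, toSpanNonzeroSingleton_one,
    toSpanNonzeroSingleton_one] at h
  exact h.symm

theorem Submodule.exists_eq_span_singleton_of_finrank_eq_one {K V : Type*} [Field K]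
    [AddCommGroup V] [Module K V] {D : Submodule K V} (hD : Module.finrank K D = 1) :
    ∃ v ≠ 0, D = K ∙ v := by
  obtain ⟨v, hv, -⟩ := finrank_eq_one_iff'.mp hD
  have hv' : (v : V) ≠ 0 := by simpa using hv
  exact ⟨v, hv', eq_span_singleton_of_mem_of_finrank_eq_one hD v.2 hv'⟩

theorem Matrix.exists_isUnit_mulVec_eq {K : Type*} [Field K] {n : ℕ} {v w : Fin n → K}
    (hv : v ≠ 0) (hw : w ≠ 0) : ∃ B : Matrix (Fin n) (Fin n) K, IsUnit B ∧ B *ᵥ v = w := by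
  obtain ⟨g, hg⟩ := LinearEquiv.exists_apply_eq_of_ne_zero (K := K) hv hw
  have hB : ∀ x, LinearMap.toMatrix' g.toLinearMap *ᵥ x = g x := LinearMap.toMatrix'_mulVec _
  exact ⟨_, mulVec_injective_iff_isUnit.mp (by rw [funext hB]; exact g.injective),
    by rw [hB, hg]⟩

theorem mem_annihilatorSpace_span_singleton {K : Type*} [Field K] {n : ℕ}
    {v : Fin n → K} {M : Matrix (Fin n) (Fin n) K} :
    M ∈ annihilatorSpace K n (K ∙ v) ↔ M *ᵥ v = 0 := by
  refine ⟨fun h => h v (mem_span_singleton_self v), fun h x hx => ?_⟩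
  obtain ⟨c, rfl⟩ := mem_span_singleton.mp hx
  rw [mulVec_smul, h, smul_zero]

theorem not_isUnit_of_mem_annihilatorSpace {K : Type*} [Field K] {n : ℕ}
    {D : Submodule K (Fin n → K)} (hD : D ≠ ⊥) {M : Matrix (Fin n) (Fin n) K}
    (hM : M ∈ annihilatorSpace K n D) : ¬IsUnit M := by
  obtain ⟨x, hx, hx0⟩ := exists_mem_ne_zero_of_ne_bot hD
  rw [← mulVec_injective_iff_isUnit]
  exact fun hinj => hx0 (hinj (by rw [hM x hx, mulVec_zero]))

theorem le_annihilatorSpace_span_singleton {K : Type*} [Field K] {n : ℕ} {v : Fin n → K}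
    (hv : v ≠ 0) {W : Submodule K (Matrix (Fin n) (Fin n) K)}
    (hle : annihilatorSpace K n (K ∙ v) ≤ W) (hW : ∀ M ∈ W, ¬IsUnit M) :
    W ≤ annihilatorSpace K n (K ∙ v) := by
  intro A hA
  rw [mem_annihilatorSpace_span_singleton]
  by_contra hAv
  obtain ⟨B, hB, hBv⟩ := exists_isUnit_mulVec_eq hv hAv
  have hBA : B - A ∈ W :=
    hle (mem_annihilatorSpace_span_singleton.mpr (by rw [sub_mulVec, hBv, sub_self]))
  exact hW B (by simpa using W.add_mem hBA hA) hB

theorem stmt_2_general {K : Type*} [Field K] {n : ℕ}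
    (D : Submodule K (Fin n → K)) (hD : Module.finrank K D = 1) :
    (∀ M ∈ annihilatorSpace K n D, ¬ IsUnit M) ∧
    (∀ W : Submodule K (Matrix (Fin n) (Fin n) K),
      annihilatorSpace K n D ≤ W → (∀ M ∈ W, ¬ IsUnit M) →
      W = annihilatorSpace K n D) := by
  obtain ⟨v, hv, rfl⟩ := exists_eq_span_singleton_of_finrank_eq_one hD
  exact ⟨fun M => not_isUnit_of_mem_annihilatorSpace (by simpa using hv), fun W hle hW =>
    le_antisymm (le_annihilatorSpace_span_singleton hv hle hW) hle⟩

theorem stmt_2 {K : Type*} [Field K] {n : ℕ} (hn : 0 < n)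
    (D : Submodule K (Fin n → K)) (hD : Module.finrank K D = 1) :
    (∀ M ∈ annihilatorSpace K n D, ¬ IsUnit M) ∧
    (∀ W : Submodule K (Matrix (Fin n) (Fin n) K),
      annihilatorSpace K n D ≤ W → (∀ M ∈ W, ¬ IsUnit M) →
      W = annihilatorSpace K n D) :=
  stmt_2_general D hD
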